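/- arXiv:2012.13652 — 3 statements merged into one kernel-verified Lean document; each statement's English description precedes it below -/
import Mathlib

section
/- Every pair of distinct, non-antipodal points a, b ∈ S^d determines exactly one lune L (intersection of two distinct non-opposite closed hemispheres) such that a and b are the centers of the two (d−1)-dimensional hemispheres bounding L. -/
open Set Metric
open scoped RealInnerProductSpace

noncomputable section

/-- Euclidean space `E^{d+1}`. -/
abbrev E (d : ℕ) := EuclideanSpace ℝ (Fin (d + 1))

/-- The unit sphere `S^d ⊆ E^{d+1}`. -/
def Sph (d : ℕ) : Set (E d) := Metric.sphere (0 : E d) 1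

variable {d : ℕ}

/-- Geodesic (angular) distance on the unit sphere. -/
def sdist (x y : E d) : ℝ := Real.arccos ⟪x, y⟫

/-- Closed hemisphere with center `p`. -/
def Hemi (p : E d) : Set (E d) := {x ∈ Sph d | 0 ≤ ⟪p, x⟫}

/-- Open hemisphere with center `p`. -/
def openHemi (p : E d) : Set (E d) := {x ∈ Sph d | 0 < ⟪p, x⟫}

/-- Boundary great subsphere of the hemisphere with center `p`. -/
def bdHemi (p : E d) : Set (E d) := {x ∈ Sph d | ⟪p, x⟫ = 0}

/-- Spherical convexity: no antipodal pairs, and the nonnegative cone over the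
set is convex (equivalent to being closed under shorter arcs). -/
def SphConvex (C : Set (E d)) : Prop :=
  (∀ x ∈ C, -x ∉ C) ∧ Convex ℝ {v : E d | ∃ r : ℝ, 0 ≤ r ∧ ∃ x ∈ C, v = r • x}

/-- Spherical convex hull: the smallest spherically convex subset of the
sphere containing `A`. -/
def sConvHull (A : Set (E d)) : Set (E d) := ⋂₀ {C | SphConvex C ∧ C ⊆ Sph d ∧ A ⊆ C}

/-- Interior of `C` relative to the sphere. -/
def sInterior (C : Set (E d)) : Set (E d) :=
  {x ∈ Sph d | ∃ ε > 0, Metric.ball x ε ∩ Sph d ⊆ C}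

/-- A spherical convex body: closed, spherically convex, with nonempty
interior relative to the sphere. -/
def IsBody (C : Set (E d)) : Prop :=
  C ⊆ Sph d ∧ IsClosed C ∧ SphConvex C ∧ (sInterior C).Nonempty

/-- Spherical ball of radius `r` centered at `p`. -/
def sBall (p : E d) (r : ℝ) : Set (E d) := {x ∈ Sph d | sdist p x ≤ r}

/-- Normalization of a vector. -/
def nrm (v : E d) : E d := ‖v‖⁻¹ • v

/-- The center of the `(d-1)`-dimensional hemisphere `bd(G) ∩ H`, where `G`, `H`
are the hemispheres centered at `g`, `h`. -/
def cGH (g h : E d) : E d := nrm (h - ⟪g, h⟫ • g)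

/-- Thickness of the lune `Hemi g ∩ Hemi h`: the geodesic distance between the
centers of its two bounding `(d-1)`-dimensional hemispheres. -/
def lthick (g h : E d) : ℝ := Real.pi - sdist g h

/-- The hemisphere centered at `k` supports `C`. -/
def Supports (k : E d) (C : Set (E d)) : Prop :=
  C ⊆ Hemi k ∧ (bdHemi k ∩ C).Nonempty

/-- Width of `C` determined by a supporting hemisphere centered at `k`:
minimal thickness of a lune `K ∩ K*` over supporting hemispheres `K* ≠ K`. -/
def width (C : Set (E d)) (k : E d) : ℝ :=
  sInf {w | ∃ k' ∈ Sph d, k' ≠ k ∧ k' ≠ -k ∧ Supports k' C ∧ w = lthick k k'}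

/-- Thickness of `C`: minimal thickness of a lune containing `C`. -/
def thick (C : Set (E d)) : ℝ :=
  sInf {w | ∃ g ∈ Sph d, ∃ h ∈ Sph d, g ≠ h ∧ g ≠ -h ∧
    C ⊆ Hemi g ∩ Hemi h ∧ w = lthick g h}

/-- Spherical diameter of a set. -/
def sdiam (C : Set (E d)) : ℝ := sSup {r | ∃ x ∈ C, ∃ y ∈ C, r = sdist x y}

/-- Reduced spherical convex body. -/
def Reduced (R : Set (E d)) : Prop :=
  IsBody R ∧ ∀ Z : Set (E d), IsBody Z → Z ⊆ R → Z ≠ R → thick Z < thick R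

/-- Extreme point of a spherical convex body. -/
def ExtremePt (C : Set (E d)) (e : E d) : Prop := e ∈ C ∧ SphConvex (C \ {e})

/-!
For unit vectors `g, h` with `s = ⟪g, h⟫ ∈ (-1, 1)` and `σ = √(1 - s²)`, the centers of the
two `(d-1)`-dimensional hemispheres bounding `Hemi g ∩ Hemi h` are `a = (h - s g)/σ` and
`b = (g - s h)/σ`. They satisfy `⟪a, b⟫ = -s` and `b + s a = σ g`, so applying the same
construction to `(a, b)` gives back `(g, h)`: the map `(g, h) ↦ (cGH g h, cGH h g)` is an
involution. Hence the lune with centers `a, b` exists (take `g = cGH a b`, `h = cGH b a`) and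
is unique.
-/

section InnerProductSpace

variable {F : Type*} [NormedAddCommGroup F] [InnerProductSpace ℝ F]

theorem abs_real_inner_lt_one_iff {x y : F} (hx : ‖x‖ = 1) (hy : ‖y‖ = 1) :
    |⟪x, y⟫| < 1 ↔ x ≠ y ∧ x ≠ -y := by
  rw [abs_lt, and_comm, ← inner_lt_one_iff_real_of_norm_eq_one hx hy,
    ← inner_lt_one_iff_real_of_norm_eq_one hx (by rwa [norm_neg]), inner_neg_right, neg_lt]

theorem norm_sub_inner_smul_sq {x : F} (hx : ‖x‖ = 1) (y : F) :
    ‖y - ⟪x, y⟫ • x‖ ^ 2 = ‖y‖ ^ 2 - ⟪x, y⟫ ^ 2 := by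
  rw [norm_sub_sq_real, real_inner_smul_right, norm_smul, hx, Real.norm_eq_abs, mul_one, sq_abs,
    real_inner_comm x y]
  ring

variable {x y : F} (hx : ‖x‖ = 1) (hy : ‖y‖ = 1)
include hx hy

theorem norm_sub_inner_smul_comm : ‖x - ⟪x, y⟫ • y‖ = ‖y - ⟪x, y⟫ • x‖ := by
  have hxsq := norm_sub_inner_smul_sq hy x
  rw [real_inner_comm x y] at hxsq
  rw [← sq_eq_sq₀ (norm_nonneg _) (norm_nonneg _), hxsq, norm_sub_inner_smul_sq hx, hx, hy]

theorem norm_sub_inner_smul_pos (hxy : |⟪x, y⟫| < 1) : 0 < ‖y - ⟪x, y⟫ • x‖ := by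
  refine lt_of_pow_lt_pow_left₀ 2 (norm_nonneg _) ?_
  rwa [norm_sub_inner_smul_sq hx, hy, zero_pow two_ne_zero, one_pow, sub_pos,
    sq_lt_one_iff_abs_lt_one]

end InnerProductSpace

section Lune

theorem mem_Sph_iff {x : E d} : x ∈ Sph d ↔ ‖x‖ = 1 := mem_sphere_zero_iff_norm

theorem nrm_smul_of_pos {c : ℝ} (hc : 0 < c) (v : E d) : nrm (c • v) = nrm v := by
  rw [nrm, nrm, norm_smul, Real.norm_of_nonneg hc.le, smul_smul]
  congr 1
  field_simp

theorem nrm_of_norm_eq_one {v : E d} (hv : ‖v‖ = 1) : nrm v = v := by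
  rw [nrm, hv, inv_one, one_smul]

variable {g h : E d} (hg : ‖g‖ = 1) (hh : ‖h‖ = 1)
include hg hh

theorem cGH_comm_eq : cGH h g = ‖h - ⟪g, h⟫ • g‖⁻¹ • (g - ⟪g, h⟫ • h) := by
  rw [cGH, nrm, real_inner_comm g h, norm_sub_inner_smul_comm hg hh]

variable (hgh : |⟪g, h⟫| < 1)
include hgh

theorem norm_cGH : ‖cGH g h‖ = 1 :=
  norm_smul_inv_norm (norm_pos_iff.mp (norm_sub_inner_smul_pos hg hh hgh))

theorem inner_cGH_cGH : ⟪cGH g h, cGH h g⟫ = -⟪g, h⟫ := by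
  have hσ := norm_sub_inner_smul_pos hg hh hgh
  have hσsq := norm_sub_inner_smul_sq hg h
  rw [hh] at hσsq
  rw [cGH_comm_eq hg hh, cGH, nrm, real_inner_smul_left, real_inner_smul_right, inner_sub_left,
    inner_sub_right, inner_sub_right, real_inner_smul_left, real_inner_smul_left,
    real_inner_smul_right, real_inner_smul_right, real_inner_self_eq_norm_sq,
    real_inner_self_eq_norm_sq, hg, hh, real_inner_comm g h]
  generalize ⟪g, h⟫ = s at *
  field_simp
  linear_combination s * hσsq

theorem cGH_cGH : cGH (cGH g h) (cGH h g) = g := by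
  have hσ := norm_sub_inner_smul_pos hg hh hgh
  have hσsq := norm_sub_inner_smul_sq hg h
  rw [hh] at hσsq
  have key : cGH h g - ⟪cGH g h, cGH h g⟫ • cGH g h = ‖h - ⟪g, h⟫ • g‖ • g := by
    rw [inner_cGH_cGH hg hh hgh, cGH_comm_eq hg hh, cGH, nrm]
    generalize ⟪g, h⟫ = s at *
    match_scalars <;> field_simp <;> linarith
  rw [cGH, key, nrm_smul_of_pos hσ, nrm_of_norm_eq_one hg]

end Lune

/-- every pair of distinct non-antipodal points `a, b ∈ S^d`
determines exactly one lune such that `a` and `b` are the centers of the two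
`(d-1)`-dimensional hemispheres bounding it. -/
theorem stmt3 {d : ℕ} (a b : E d) (ha : a ∈ Sph d) (hb : b ∈ Sph d)
    (hab : a ≠ b) (hnap : b ≠ -a) :
    ∃! L : Set (E d), ∃ g ∈ Sph d, ∃ h ∈ Sph d, g ≠ h ∧ g ≠ -h ∧
      L = Hemi g ∩ Hemi h ∧ cGH g h = a ∧ cGH h g = b := by
  rw [mem_Sph_iff] at ha hb
  have hs : |⟪a, b⟫| < 1 :=
    (abs_real_inner_lt_one_iff ha hb).2 ⟨hab, fun h => hnap (by rw [h, neg_neg])⟩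
  have hs' : |⟪b, a⟫| < 1 := by rwa [real_inner_comm]
  have hg₀ := norm_cGH ha hb hs
  have hh₀ := norm_cGH hb ha hs'
  have hne := (abs_real_inner_lt_one_iff hg₀ hh₀).1 (by rwa [inner_cGH_cGH ha hb hs, abs_neg])
  refine ⟨Hemi (cGH a b) ∩ Hemi (cGH b a), ⟨cGH a b, mem_Sph_iff.2 hg₀, cGH b a,
    mem_Sph_iff.2 hh₀, hne.1, hne.2, rfl, cGH_cGH ha hb hs, cGH_cGH hb ha hs'⟩, ?_⟩
  rintro L ⟨g, hg, h, hh, hgh, hgh', rfl, rfl, rfl⟩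
  rw [mem_Sph_iff] at hg hh
  have hst := (abs_real_inner_lt_one_iff hg hh).2 ⟨hgh, hgh'⟩
  rw [cGH_cGH hg hh hst, cGH_cGH hh hg (by rwa [real_inner_comm])]
end
end

section
/- Let G and H be distinct non-opposite hemispheres of S^d, with g the center of G. If g ∉ bd(H), let B be the ball centered at g which touches bd(H) (from inside or outside of H) and let t be the point of touching; if g ∈ bd(H), put t = g. Then t is the center of the (d−1)-dimensional hemisphere H/G = bd(H) ∩ G. -/
open Set Metric
open scoped RealInnerProductSpace

noncomputable section

variable {d : ℕ}

/-!
Let `v = g - ⟪h, g⟫ h` be the orthogonal projection of `g` onto the hyperplane `h^⊥`; it is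
nonzero because `g ≠ ±h`, and `cGH h g = v / ‖v‖`. For every unit vector `t ⊥ h` we have
`⟪g, t⟫ = ⟪v, t⟫ = ‖v‖ ⟪cGH h g, t⟫`. Since `arccos` is decreasing, a point `t` of `bd(H)`
nearest to `g` maximizes `⟪g, t⟫`, so `⟪cGH h g, t⟫ ≥ 1`, and the equality case of
Cauchy–Schwarz forces `t = cGH h g`.
-/

section Projection

variable {F : Type*} [NormedAddCommGroup F] [InnerProductSpace ℝ F]

theorem inner_sub_inner_smul_of_inner_eq_zero (g : F) {h t : F} (ht : ⟪h, t⟫ = 0) :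
    ⟪g - ⟪h, g⟫ • h, t⟫ = ⟪g, t⟫ := by
  rw [inner_sub_left, real_inner_smul_left, ht, mul_zero, sub_zero]

theorem inner_sub_inner_smul_self_eq_zero {h : F} (hh : ‖h‖ = 1) (g : F) :
    ⟪h, g - ⟪h, g⟫ • h⟫ = 0 := by
  rw [inner_sub_right, real_inner_smul_right, inner_self_eq_one_of_norm_eq_one hh, mul_one,
    sub_self]

theorem sub_inner_smul_ne_zero {g h : F} (hg : ‖g‖ = 1) (hh : ‖h‖ = 1) (hne : g ≠ h)
    (hno : g ≠ -h) : g - ⟪h, g⟫ • h ≠ 0 := by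
  intro hv
  have hsq : ⟪h, g⟫ ^ 2 = 1 := by
    have hgg := inner_self_eq_one_of_norm_eq_one (𝕜 := ℝ) hg
    rw [sub_eq_zero.mp hv, real_inner_smul_left, real_inner_smul_right,
      inner_self_eq_one_of_norm_eq_one hh] at hgg
    linarith
  rcases sq_eq_one_iff.mp hsq with h1 | h1
  · exact hne ((inner_eq_one_iff_of_norm_eq_one hh hg).mp h1).symm
  · exact hno (neg_eq_iff_eq_neg.mp ((inner_eq_neg_one_iff_of_norm_eq_one hh hg).mp h1).symm)

end Projection

theorem inner_le_inner_of_sdist_le {x y z : E d} (hx : ‖x‖ = 1) (hy : ‖y‖ = 1) (hz : ‖z‖ = 1)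
    (hle : sdist x y ≤ sdist x z) : ⟪x, z⟫ ≤ ⟪x, y⟫ := by
  by_contra! hlt
  exact (Real.strictAntiOn_arccos (real_inner_mem_Icc_of_norm_eq_one hx hy)
    (real_inner_mem_Icc_of_norm_eq_one hx hz) hlt).not_ge hle

theorem norm_nrm {v : E d} (hv : v ≠ 0) : ‖nrm v‖ = 1 := norm_smul_inv_norm hv

theorem cGH_mem_bdHemi {g h : E d} (hg : ‖g‖ = 1) (hh : ‖h‖ = 1) (hne : g ≠ h)
    (hno : g ≠ -h) : cGH h g ∈ bdHemi h :=
  ⟨mem_Sph_iff.mpr (norm_nrm (sub_inner_smul_ne_zero hg hh hne hno)), by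
    rw [cGH, nrm, real_inner_smul_right, inner_sub_inner_smul_self_eq_zero hh, mul_zero]⟩

theorem inner_eq_norm_mul_inner_cGH {g h t : E d} (hv : g - ⟪h, g⟫ • h ≠ 0)
    (ht : ⟪h, t⟫ = 0) : ⟪g, t⟫ = ‖g - ⟪h, g⟫ • h‖ * ⟪cGH h g, t⟫ := by
  rw [cGH, nrm, real_inner_smul_left, mul_inv_cancel_left₀ (norm_ne_zero_iff.mpr hv),
    inner_sub_inner_smul_of_inner_eq_zero g ht]

/-- the point of `bd(H)` nearest to the center `g` of `G` (the
touching point of the ball centered at `g` touching `bd(H)`, or `g` itself if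
`g ∈ bd(H)`) is the center of the `(d-1)`-dimensional hemisphere
`H/G = bd(H) ∩ G`. -/
theorem stmt9 {d : ℕ} (g h : E d) (hg : g ∈ Sph d) (hh : h ∈ Sph d)
    (hne : g ≠ h) (hno : g ≠ -h)
    (t : E d) (ht : t ∈ bdHemi h) (hmin : ∀ x ∈ bdHemi h, sdist g t ≤ sdist g x) :
    t = cGH h g := by
  rw [mem_Sph_iff] at hg hh
  have hv := sub_inner_smul_ne_zero hg hh hne hno
  have hc := cGH_mem_bdHemi hg hh hne hno
  have hcn : ‖cGH h g‖ = 1 := mem_Sph_iff.mp hc.1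
  have htn : ‖t‖ = 1 := mem_Sph_iff.mp ht.1
  have hgt := inner_eq_norm_mul_inner_cGH hv ht.2
  have hgc := inner_eq_norm_mul_inner_cGH hv hc.2
  rw [inner_self_eq_one_of_norm_eq_one hcn, mul_one] at hgc
  have hle : ⟪g, cGH h g⟫ ≤ ⟪g, t⟫ := inner_le_inner_of_sdist_le hg htn hcn (hmin _ hc)
  have hct : 1 ≤ ⟪cGH h g, t⟫ := by
    rw [hgc, hgt] at hle
    exact (le_mul_iff_one_le_right (norm_pos_iff.mpr hv)).mp hle
  exact ((inner_eq_one_iff_of_norm_eq_one hcn htn).mp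
    (le_antisymm (real_inner_le_one_of_norm_eq_one hcn htn) hct)).symm
end
end

section
/- Let C ⊂ S^d be a convex body. If diam(C) < π/2, then any two points of C at distance diam(C) are both extreme points of C. Moreover, every convex body of diameter exactly π/2 contains a pair of extreme points at distance π/2. -/
open Set Metric
open scoped RealInnerProductSpace

noncomputable section

variable {d : ℕ}

/-! A point `e` of a spherically convex `C` is extreme as soon as no positive combination
`α a + β b` of two other points of `C` lies on the ray through `e`.

If `p, q` is a diametral pair and `diam C < π/2`, pairing `α a + β b = ρ p` with `q` gives
`ρ ≥ α + β`, since every point of `C` is at least as close to `q` as `p` and `cos (diam C) > 0`;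
the triangle inequality gives `ρ ≤ α + β`, and equality forces `a = b = p`.

If `diam C = π/2`, all inner products on `C` are nonnegative, and positive against an interior
point `u`. A compact subset of the open hemisphere of `u` has an extreme point: take one of its
central projection onto `⟪u, ·⟫ = 1` (Krein–Milman). Extreme points of a face `C ∩ w^⊥`, with
`⟪w, ·⟫ ≥ 0` on `C`, are extreme in `C`. For a diametral pair `p ⊥ q` this gives an extreme
point `e₁` in `C ∩ q^⊥ ∋ p`, and then an extreme point `e₂` in `C ∩ e₁^⊥ ∋ q`. -/

open Filter Topology

def posCone (A : Set (E d)) : Set (E d) := {v | ∃ r : ℝ, 0 ≤ r ∧ ∃ x ∈ A, v = r • x}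

lemma smul_mem_posCone {A : Set (E d)} {x : E d} (hx : x ∈ A) {r : ℝ} (hr : 0 ≤ r) :
    r • x ∈ posCone A :=
  ⟨r, hr, x, hx, rfl⟩

lemma norm_of_mem_sph {x : E d} (hx : x ∈ Sph d) : ‖x‖ = 1 :=
  mem_sphere_zero_iff_norm.1 hx

lemma eq_of_smul_eq_smul_of_norm_eq_one {x y : E d} {r s : ℝ} (hx : ‖x‖ = 1) (hy : ‖y‖ = 1)
    (hr : 0 < r) (hs : 0 ≤ s) (h : r • x = s • y) : x = y := by
  have hrs : r = s := by
    simpa [norm_smul, hx, hy, abs_of_pos hr, abs_of_nonneg hs] using congrArg norm h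
  subst hrs
  exact smul_right_injective (E d) hr.ne' h

/-- The ray through `e` is an extreme ray of `posCone A`. -/
def IsExtremeRay (A : Set (E d)) (e : E d) : Prop :=
  ∀ a ∈ A \ {e}, ∀ b ∈ A \ {e}, ∀ α β ρ : ℝ, 0 < α → 0 < β → 0 < ρ → α • a + β • b ≠ ρ • e

lemma convex_posCone_diff_of_isExtremeRay {A : Set (E d)} {e : E d}
    (hA : Convex ℝ (posCone A)) (he : IsExtremeRay A e) : Convex ℝ (posCone (A \ {e})) := by
  rintro _ ⟨r₁, hr₁, a, ha, rfl⟩ _ ⟨r₂, hr₂, b, hb, rfl⟩ t s ht hs hts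
  obtain ⟨r, hr, z, hz, hzeq⟩ :=
    hA (smul_mem_posCone ha.1 hr₁) (smul_mem_posCone hb.1 hr₂) ht hs hts
  rw [smul_smul, smul_smul] at hzeq ⊢
  by_cases hze : z = e
  swap
  · exact ⟨r, hr, z, ⟨hz, hze⟩, hzeq⟩
  subst hze
  rcases hr.eq_or_lt with rfl | hr
  · exact ⟨0, le_rfl, a, ha, by rw [hzeq, zero_smul, zero_smul]⟩
  rcases (mul_nonneg ht hr₁).eq_or_lt with hα | hα
  · exact ⟨s * r₂, mul_nonneg hs hr₂, b, hb, by rw [← hα, zero_smul, zero_add]⟩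
  rcases (mul_nonneg hs hr₂).eq_or_lt with hβ | hβ
  · exact ⟨t * r₁, mul_nonneg ht hr₁, a, ha, by rw [← hβ, zero_smul, add_zero]⟩
  exact absurd hzeq (he a ha b hb _ _ r hα hβ hr)

lemma SphConvex.extremePt_of_isExtremeRay {C : Set (E d)} {e : E d} (hC : SphConvex C)
    (heC : e ∈ C) (he : IsExtremeRay C e) : ExtremePt C e :=
  ⟨heC, fun x hx hnx => hC.1 x hx.1 hnx.1, convex_posCone_diff_of_isExtremeRay hC.2 he⟩

lemma IsExtremeRay.of_face {C : Set (E d)} {w e : E d} (hw : ∀ x ∈ C, 0 ≤ ⟪w, x⟫)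
    (hwe : ⟪w, e⟫ = 0) (he : IsExtremeRay {x ∈ C | ⟪w, x⟫ = 0} e) : IsExtremeRay C e := by
  intro a ha b hb α β ρ hα hβ hρ hab
  have hsum : α * ⟪w, a⟫ + β * ⟪w, b⟫ = 0 := by
    simpa [inner_add_right, real_inner_smul_right, hwe] using congrArg (⟪w, ·⟫) hab
  have hwa := hw a ha.1
  have hwb := hw b hb.1
  exact he a ⟨⟨ha.1, by nlinarith⟩, ha.2⟩ b ⟨⟨hb.1, by nlinarith⟩, hb.2⟩ α β ρ hα hβ hρ hab

def gnomonic (u x : E d) : E d := ⟪u, x⟫⁻¹ • x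

lemma gnomonic_mem_openSegment {u a b e : E d} {α β ρ : ℝ} (ha : 0 < ⟪u, a⟫)
    (hb : 0 < ⟪u, b⟫) (he : 0 < ⟪u, e⟫) (hα : 0 < α) (hβ : 0 < β) (hρ : 0 < ρ)
    (h : α • a + β • b = ρ • e) :
    gnomonic u e ∈ openSegment ℝ (gnomonic u a) (gnomonic u b) := by
  have hsum : α * ⟪u, a⟫ + β * ⟪u, b⟫ = ρ * ⟪u, e⟫ := by
    simpa [inner_add_right, real_inner_smul_right] using congrArg (⟪u, ·⟫) h
  -- the weights are the shares of `α a` and `β b` in `⟪u, ρ e⟫`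
  refine ⟨α * ⟪u, a⟫ / (ρ * ⟪u, e⟫), β * ⟪u, b⟫ / (ρ * ⟪u, e⟫), by positivity, by positivity,
    by rw [← add_div, hsum, div_self (by positivity)], ?_⟩
  simp only [gnomonic, smul_smul]
  rw [show α * ⟪u, a⟫ / (ρ * ⟪u, e⟫) * ⟪u, a⟫⁻¹ = (ρ * ⟪u, e⟫)⁻¹ * α by field_simp,
    show β * ⟪u, b⟫ / (ρ * ⟪u, e⟫) * ⟪u, b⟫⁻¹ = (ρ * ⟪u, e⟫)⁻¹ * β by field_simp,
    ← smul_smul, ← smul_smul, ← smul_add, h, smul_smul]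
  congr 1
  field_simp

lemma exists_isExtremeRay {F : Set (E d)} {u : E d} (hFs : F ⊆ Sph d) (hF : IsClosed F)
    (hne : F.Nonempty) (hu : ∀ x ∈ F, 0 < ⟪u, x⟫) :
    ∃ e ∈ F, IsExtremeRay F e := by
  have hcont : ContinuousOn (gnomonic u) F :=
    ((continuous_const.inner continuous_id).continuousOn.inv₀ fun x hx => (hu x hx).ne').smul
      continuousOn_id
  have hcompact : IsCompact (gnomonic u '' F) :=
    ((isCompact_sphere (0 : E d) 1).of_isClosed_subset hF hFs).image_of_continuousOn hcont
  obtain ⟨_, ⟨e, heF, rfl⟩, hext⟩ := hcompact.extremePoints_nonempty (hne.image _)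
  refine ⟨e, heF, fun a ha b hb α β ρ hα hβ hρ hab => ha.2 ?_⟩
  have hga : gnomonic u a = gnomonic u e := hext ⟨a, ha.1, rfl⟩ ⟨b, hb.1, rfl⟩
    (gnomonic_mem_openSegment (hu a ha.1) (hu b hb.1) (hu e heF) hα hβ hρ hab)
  exact eq_of_smul_eq_smul_of_norm_eq_one (norm_of_mem_sph (hFs ha.1))
    (norm_of_mem_sph (hFs heF)) (inv_pos.2 (hu a ha.1)) (inv_nonneg.2 (hu e heF).le) hga

lemma cos_sdist {x y : E d} (hx : ‖x‖ = 1) (hy : ‖y‖ = 1) :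
    Real.cos (sdist x y) = ⟪x, y⟫ := by
  have h := abs_real_inner_le_norm x y
  rw [hx, hy, mul_one] at h
  exact Real.cos_arccos (abs_le.1 h).1 (abs_le.1 h).2

lemma cos_le_inner_of_sdist_le {x y : E d} {D : ℝ} (hx : ‖x‖ = 1) (hy : ‖y‖ = 1)
    (hD : D ≤ Real.pi) (h : sdist x y ≤ D) : Real.cos D ≤ ⟪x, y⟫ :=
  cos_sdist hx hy ▸ Real.cos_le_cos_of_nonneg_of_le_pi (Real.arccos_nonneg _) hD h

lemma sdist_comm (x y : E d) : sdist x y = sdist y x := by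
  rw [sdist, sdist, real_inner_comm]

lemma sdist_le_sdiam {C : Set (E d)} {x y : E d} (hx : x ∈ C) (hy : y ∈ C) :
    sdist x y ≤ sdiam C :=
  le_csSup ⟨Real.pi, by rintro _ ⟨x, -, y, -, rfl⟩; exact Real.arccos_le_pi _⟩ ⟨x, hx, y, hy, rfl⟩

lemma exists_sdist_eq_sdiam {C : Set (E d)} (hCs : C ⊆ Sph d) (hC : IsClosed C)
    (hne : C.Nonempty) : ∃ p ∈ C, ∃ q ∈ C, sdist p q = sdiam C := by
  have hcomp : IsCompact C := (isCompact_sphere (0 : E d) 1).of_isClosed_subset hC hCs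
  have hcont : Continuous fun pq : E d × E d => sdist pq.1 pq.2 :=
    Real.continuous_arccos.comp (continuous_fst.inner continuous_snd)
  obtain ⟨⟨p, q⟩, ⟨hp, hq⟩, hmax⟩ :=
    (hcomp.prod hcomp).exists_isMaxOn (hne.prod hne) hcont.continuousOn
  refine ⟨p, hp, q, hq, le_antisymm (sdist_le_sdiam hp hq) (csSup_le ?_ ?_)⟩
  · obtain ⟨x, hx⟩ := hne
    exact ⟨_, x, hx, x, hx, rfl⟩
  · rintro _ ⟨x, hx, y, hy, rfl⟩
    exact isMaxOn_iff.1 hmax (x, y) ⟨hx, hy⟩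

lemma isExtremeRay_of_sdist_eq {C : Set (E d)} {D : ℝ} {p q : E d} (hCs : C ⊆ Sph d)
    (hD : D < Real.pi / 2) (hdiam : ∀ x ∈ C, ∀ y ∈ C, sdist x y ≤ D) (hp : p ∈ C) (hq : q ∈ C)
    (hpq : sdist p q = D) : IsExtremeRay C p := by
  intro a ha b hb α β ρ hα hβ hρ hab
  have hunit : ∀ x ∈ C, ‖x‖ = 1 := fun x hx => norm_of_mem_sph (hCs hx)
  have hD0 : 0 ≤ D := hpq ▸ Real.arccos_nonneg _
  have hcos : 0 < Real.cos D := Real.cos_pos_of_mem_Ioo ⟨by linarith [Real.pi_pos], hD⟩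
  have hDpi : D ≤ Real.pi := by linarith [Real.pi_pos]
  have haq := cos_le_inner_of_sdist_le (hunit a ha.1) (hunit q hq) hDpi (hdiam a ha.1 q hq)
  have hbq := cos_le_inner_of_sdist_le (hunit b hb.1) (hunit q hq) hDpi (hdiam b hb.1 q hq)
  -- `a` and `b` are at least as close to `q` as `p` is
  have hle : α + β ≤ ρ := by
    have h := congrArg (⟪·, q⟫) hab
    simp only [inner_add_left, real_inner_smul_left] at h
    rw [← cos_sdist (hunit p hp) (hunit q hq), hpq] at h
    nlinarith
  have hnorm : ‖α • a + β • b‖ = ‖α • a‖ + ‖β • b‖ := by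
    refine le_antisymm (norm_add_le _ _) ?_
    simpa [hab, norm_smul, hunit a ha.1, hunit b hb.1, hunit p hp, abs_of_pos hα,
      abs_of_pos hβ, abs_of_pos hρ] using hle
  have hsame : SameRay ℝ a b := by
    simpa [inv_smul_smul₀ hα.ne', inv_smul_smul₀ hβ.ne'] using
      ((sameRay_iff_norm_add.2 hnorm).pos_smul_left (inv_pos.2 hα)).pos_smul_right
        (inv_pos.2 hβ)
  obtain rfl : a = b := hsame.eq_of_norm_eq (by rw [hunit a ha.1, hunit b hb.1])
  rw [← add_smul] at hab
  exact ha.2 (eq_of_smul_eq_smul_of_norm_eq_one (hunit a ha.1) (hunit p hp) (by positivity)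
    hρ.le hab)

lemma mem_of_mem_sInterior {C : Set (E d)} {c : E d} (hc : c ∈ sInterior C) : c ∈ C :=
  let ⟨hcS, _, hε, hball⟩ := hc
  hball ⟨mem_ball_self hε, hcS⟩

lemma inner_pos_of_mem_sInterior {C : Set (E d)} {c x : E d} (hCs : C ⊆ Sph d)
    (hc : c ∈ sInterior C) (hC : ∀ y ∈ C, ∀ z ∈ C, 0 ≤ ⟪y, z⟫) (hx : x ∈ C) :
    0 < ⟪c, x⟫ := by
  refine (hC c (mem_of_mem_sInterior hc) x hx).lt_of_ne fun hcx => ?_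
  obtain ⟨hcS, ε, hε, hball⟩ := hc
  have hxn := norm_of_mem_sph (hCs hx)
  have hcn := norm_of_mem_sph hcS
  -- rotating `c` slightly away from `x` keeps it in `C` but makes an obtuse angle with `x`
  set f : ℝ → E d := fun t => Real.cos t • c - Real.sin t • x with hf
  have hlim : Tendsto f (𝓝[>] 0) (𝓝 c) := by
    have hcont : Continuous f := by fun_prop
    simpa [hf] using hcont.continuousWithinAt (s := Ioi 0) (x := 0) |>.tendsto
  obtain ⟨t, hft, ht⟩ :=
    ((hlim.eventually (ball_mem_nhds c hε)).and (Ioo_mem_nhdsGT Real.pi_pos)).exists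
  have hftS : f t ∈ Sph d := by
    rw [Sph, mem_sphere_zero_iff_norm, ← sq_eq_sq₀ (norm_nonneg _) zero_le_one, one_pow, hf,
      norm_sub_sq_real, norm_smul, norm_smul, real_inner_smul_left, real_inner_smul_right, ← hcx,
      hcn, hxn]
    simp [Real.cos_sq_add_sin_sq]
  have hneg : ⟪f t, x⟫ = -Real.sin t := by
    rw [hf, inner_sub_left, real_inner_smul_left, real_inner_smul_left, ← hcx,
      real_inner_self_eq_norm_sq, hxn]
    ring
  have := hC _ (hball ⟨hft, hftS⟩) x hx
  linarith [Real.sin_pos_of_pos_of_lt_pi ht.1 ht.2]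

lemma exists_extremePt_inner_eq_zero {C : Set (E d)} {u w y : E d} (hCs : C ⊆ Sph d)
    (hCcl : IsClosed C) (hC : SphConvex C) (hu : ∀ x ∈ C, 0 < ⟪u, x⟫)
    (hw : ∀ x ∈ C, 0 ≤ ⟪w, x⟫) (hy : y ∈ C) (hwy : ⟪w, y⟫ = 0) :
    ∃ e, ExtremePt C e ∧ ⟪w, e⟫ = 0 := by
  have hface : IsClosed {x ∈ C | ⟪w, x⟫ = 0} :=
    hCcl.inter (isClosed_eq (continuous_const.inner continuous_id) continuous_const)
  obtain ⟨e, ⟨heC, hwe⟩, he⟩ :=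
    exists_isExtremeRay (fun x hx => hCs hx.1) hface ⟨y, hy, hwy⟩ fun x hx => hu x hx.1
  exact ⟨e, hC.extremePt_of_isExtremeRay heC (he.of_face hw hwe), hwe⟩

/-- in a convex body of diameter `< π/2` every diametral pair
consists of extreme points; every convex body of diameter `π/2` contains a
pair of extreme points at distance `π/2`. -/
theorem stmt17 {d : ℕ} (C : Set (E d)) (hC : IsBody C) :
    (sdiam C < Real.pi / 2 →
      ∀ p ∈ C, ∀ q ∈ C, sdist p q = sdiam C →
        ExtremePt C p ∧ ExtremePt C q) ∧
    (sdiam C = Real.pi / 2 →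
      ∃ p q : E d, ExtremePt C p ∧ ExtremePt C q ∧ sdist p q = Real.pi / 2) := by
  obtain ⟨hCs, hCcl, hC, c, hc⟩ := hC
  have hdiam : ∀ x ∈ C, ∀ y ∈ C, sdist x y ≤ sdiam C := fun x hx y hy => sdist_le_sdiam hx hy
  refine ⟨fun hD p hp q hq hpq => ⟨?_, ?_⟩, fun hD => ?_⟩
  · exact hC.extremePt_of_isExtremeRay hp (isExtremeRay_of_sdist_eq hCs hD hdiam hp hq hpq)
  · exact hC.extremePt_of_isExtremeRay hq
      (isExtremeRay_of_sdist_eq hCs hD hdiam hq hp (sdist_comm q p ▸ hpq))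
  have hnonneg : ∀ x ∈ C, ∀ y ∈ C, 0 ≤ ⟪x, y⟫ := fun x hx y hy => by
    have h := cos_le_inner_of_sdist_le (D := Real.pi / 2) (norm_of_mem_sph (hCs hx))
      (norm_of_mem_sph (hCs hy)) (by linarith [Real.pi_pos]) (hD ▸ hdiam x hx y hy)
    rwa [Real.cos_pi_div_two] at h
  have hpos : ∀ x ∈ C, 0 < ⟪c, x⟫ := fun x hx => inner_pos_of_mem_sInterior hCs hc hnonneg hx
  obtain ⟨p, hp, q, hq, hpq⟩ := exists_sdist_eq_sdiam hCs hCcl ⟨c, mem_of_mem_sInterior hc⟩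
  rw [hD, sdist, Real.arccos_eq_pi_div_two] at hpq
  obtain ⟨e₁, he₁, hqe₁⟩ := exists_extremePt_inner_eq_zero hCs hCcl hC hpos (hnonneg q hq) hp
    (by rwa [real_inner_comm])
  obtain ⟨e₂, he₂, he₁e₂⟩ := exists_extremePt_inner_eq_zero hCs hCcl hC hpos (hnonneg e₁ he₁.1)
    hq (by rwa [real_inner_comm])
  exact ⟨e₁, e₂, he₁, he₂, by rw [sdist, he₁e₂, Real.arccos_zero]⟩
end
end
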